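/- If γ is a closed piecewise C¹ path in an open set U ⊆ ℂ that is null-homotopic in U (homotopic through closed paths in a compact subset of U to a constant path), then ∮_γ f(z) dz = 0 for every function f holomorphic on U. -/

import Mathlib

/-!
Cut the unit square into an `N × N` grid so fine that `σ` maps each cell into a disc contained
in `U`. On a disc `f` has a primitive, so the integral of `f` along a segment joining two points
of the disc is the difference of the primitive at its ends. Replacing each row `σ (i / N, ·)` by
the closed polygon through its grid points, two consecutive polygons thus have the same integral:
the difference is a sum of integrals around cells, each of which vanishes, and the transversal
segments cancel by periodicity. The first polygon has the same integral as `γ` (again by local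
primitives), and the last one is constant.
-/

open Set intervalIntegral

def PiecewiseC1On (γ : ℝ → ℂ) (a b : ℝ) : Prop :=
  ContinuousOn γ (Set.Icc a b) ∧ ∃ n : ℕ, ∃ p : ℕ → ℝ, 0 < n ∧ p 0 = a ∧ p n = b ∧
    (∀ i < n, p i < p (i + 1)) ∧ ∀ i < n, ContDiffOn ℝ 1 γ (Set.Icc (p i) (p (i + 1)))

open Metric MeasureTheory

section PathIntegral

variable {f F : ℂ → ℂ} {S : Set ℂ}

theorem integral_comp_mul_deriv_eq_sub_of_countable {γ : ℝ → ℂ} {s : Set ℝ} {a b : ℝ}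
    (hab : a ≤ b) (hs : s.Countable) (hγ : ContinuousOn γ (Icc a b))
    (hγd : ∀ t ∈ Ioo a b \ s, DifferentiableAt ℝ γ t) (hγS : MapsTo γ (Icc a b) S)
    (hF : ∀ z ∈ S, HasDerivAt F (f z) z)
    (hint : IntervalIntegrable (fun t => f (γ t) * deriv γ t) volume a b) :
    ∫ t in a..b, f (γ t) * deriv γ t = F (γ b) - F (γ a) := by
  have hFc : ContinuousOn F S := fun z hz => (hF z hz).continuousAt.continuousWithinAt
  refine integral_eq_of_hasDerivAt_off_countable_of_le (F ∘ γ) _ hab hs (hFc.comp hγ hγS)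
    (fun t ht => ?_) hint
  exact (hF _ (hγS (Ioo_subset_Icc_self ht.1))).comp t (hγd t ht).hasDerivAt

noncomputable def segmentIntegral (f : ℂ → ℂ) (a b : ℂ) : ℂ :=
  ∫ t in (0:ℝ)..1, f (a + t • (b - a)) * (b - a)

theorem segmentIntegral_eq_sub (hS : Convex ℝ S) (hf : ContinuousOn f S)
    (hF : ∀ z ∈ S, HasDerivAt F (f z) z) {a b : ℂ} (ha : a ∈ S) (hb : b ∈ S) :
    segmentIntegral f a b = F b - F a := by
  have hseg : ∀ t : ℝ, HasDerivAt (fun t : ℝ => a + t • (b - a)) (b - a) t := fun t => by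
    simpa using ((hasDerivAt_id t).smul_const (b - a)).const_add a
  have hmaps : MapsTo (fun t : ℝ => a + t • (b - a)) (Icc 0 1) S :=
    fun t ht => hS.add_smul_sub_mem ha hb ht
  have hint : IntervalIntegrable (fun t : ℝ => f (a + t • (b - a)) * (b - a)) volume 0 1 := by
    refine ContinuousOn.intervalIntegrable ?_
    rw [uIcc_of_le zero_le_one]
    exact (hf.comp (by fun_prop) hmaps).mul continuousOn_const
  have h := integral_comp_mul_deriv_eq_sub_of_countable zero_le_one countable_empty
    (by fun_prop) (fun t _ => (hseg t).differentiableAt) hmaps hF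
    (by simpa only [(hseg _).deriv] using hint)
  simpa only [segmentIntegral, (hseg _).deriv, zero_smul, one_smul, add_zero, add_sub_cancel]
    using h

theorem segmentIntegral_add_segmentIntegral_eq (hS : Convex ℝ S) (hf : ContinuousOn f S)
    (hF : ∀ z ∈ S, HasDerivAt F (f z) z) {a b c d : ℂ}
    (ha : a ∈ S) (hb : b ∈ S) (hc : c ∈ S) (hd : d ∈ S) :
    segmentIntegral f a b + segmentIntegral f b d =
      segmentIntegral f a c + segmentIntegral f c d := by
  simp only [segmentIntegral_eq_sub hS hf hF, *]
  ring

end PathIntegral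

section PiecewiseC1

variable {γ : ℝ → ℂ} {a b : ℝ}

theorem exists_lt_mem_Icc_of_mem_Icc {p : ℕ → ℝ} :
    ∀ {n : ℕ}, 0 < n → ∀ t ∈ Icc (p 0) (p n), ∃ i < n, t ∈ Icc (p i) (p (i + 1))
  | 0, hn, _, _ => absurd hn (lt_irrefl 0)
  | n + 1, _, t, ht => by
    rcases Nat.eq_zero_or_pos n with rfl | hn
    · exact ⟨0, Nat.one_pos, ht⟩
    by_cases htn : t ≤ p n
    · obtain ⟨i, hi, hti⟩ := exists_lt_mem_Icc_of_mem_Icc hn t ⟨ht.1, htn⟩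
      exact ⟨i, by omega, hti⟩
    · exact ⟨n, n.lt_succ_self, (not_le.1 htn).le, ht.2⟩

theorem PiecewiseC1On.exists_countable_differentiableAt (hγ : PiecewiseC1On γ a b) :
    ∃ s : Set ℝ, s.Countable ∧ ∀ t ∈ Ioo a b \ s, DifferentiableAt ℝ γ t := by
  obtain ⟨-, n, p, hn, rfl, rfl, -, hC1⟩ := hγ
  refine ⟨range p, countable_range p, fun t ⟨ht, htp⟩ => ?_⟩
  obtain ⟨i, hi, hti⟩ := exists_lt_mem_Icc_of_mem_Icc hn t (Ioo_subset_Icc_self ht)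
  have hti' : t ∈ Ioo (p i) (p (i + 1)) :=
    ⟨hti.1.lt_of_ne fun h => htp ⟨i, h⟩, hti.2.lt_of_ne fun h => htp ⟨i + 1, h.symm⟩⟩
  exact ((hC1 i hi).differentiableOn one_ne_zero t (Ioo_subset_Icc_self hti')).differentiableAt
    (Icc_mem_nhds hti'.1 hti'.2)

theorem ContDiffOn.intervalIntegrable_deriv (hab : a < b) (hγ : ContDiffOn ℝ 1 γ (Icc a b)) :
    IntervalIntegrable (deriv γ) volume a b := by
  rw [intervalIntegrable_iff_integrableOn_Ioo_of_le hab.le]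
  have hcont := hγ.continuousOn_derivWithin (uniqueDiffOn_Icc hab) le_rfl
  refine (hcont.integrableOn_Icc.mono_set Ioo_subset_Icc_self).congr_fun (fun t ht => ?_)
    measurableSet_Ioo
  exact derivWithin_of_mem_nhds (Icc_mem_nhds ht.1 ht.2)

theorem PiecewiseC1On.intervalIntegrable_deriv (hγ : PiecewiseC1On γ a b) :
    IntervalIntegrable (deriv γ) volume a b := by
  obtain ⟨-, n, p, -, rfl, rfl, hp, hC1⟩ := hγ
  exact IntervalIntegrable.trans_iterate fun i hi => (hC1 i hi).intervalIntegrable_deriv (hp i hi)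

variable {f F : ℂ → ℂ} {S : Set ℂ} {c d : ℝ}

theorem PiecewiseC1On.intervalIntegrable_comp_mul_deriv (hγ : PiecewiseC1On γ a b)
    (hc : a ≤ c) (hcd : c ≤ d) (hd : d ≤ b) (hf : ContinuousOn f S)
    (hγS : MapsTo γ (Icc c d) S) :
    IntervalIntegrable (fun t => f (γ t) * deriv γ t) volume c d := by
  refine (hγ.intervalIntegrable_deriv.mono_set ?_).continuousOn_mul ?_
  · rw [uIcc_of_le hcd, uIcc_of_le (hc.trans (hcd.trans hd))]
    exact Icc_subset_Icc hc hd
  · rw [uIcc_of_le hcd]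
    exact hf.comp (hγ.1.mono (Icc_subset_Icc hc hd)) hγS

theorem PiecewiseC1On.integral_comp_mul_deriv_eq_sub (hγ : PiecewiseC1On γ a b)
    (hc : a ≤ c) (hcd : c ≤ d) (hd : d ≤ b) (hf : ContinuousOn f S)
    (hγS : MapsTo γ (Icc c d) S) (hF : ∀ z ∈ S, HasDerivAt F (f z) z) :
    ∫ t in c..d, f (γ t) * deriv γ t = F (γ d) - F (γ c) := by
  obtain ⟨s, hs, hγd⟩ := hγ.exists_countable_differentiableAt
  exact integral_comp_mul_deriv_eq_sub_of_countable hcd hs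
    (hγ.1.mono (Icc_subset_Icc hc hd))
    (fun t ht => hγd t ⟨Ioo_subset_Ioo hc hd ht.1, ht.2⟩) hγS hF
    (hγ.intervalIntegrable_comp_mul_deriv hc hcd hd hf hγS)

end PiecewiseC1

section Polygon

variable {f : ℂ → ℂ} {N : ℕ}

noncomputable def polygonIntegral (f : ℂ → ℂ) (v : ℕ → ℂ) (N : ℕ) : ℂ :=
  ∑ j ∈ Finset.range N, segmentIntegral f (v j) (v (j + 1))

theorem polygonIntegral_congr {v w : ℕ → ℂ} (h : ∀ j ≤ N, v j = w j) :
    polygonIntegral f v N = polygonIntegral f w N :=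
  Finset.sum_congr rfl fun j hj => by
    rw [h j (Finset.mem_range.1 hj).le, h (j + 1) (Finset.mem_range.1 hj)]

theorem polygonIntegral_eq_zero_of_forall_eq {v : ℕ → ℂ} {c : ℂ}
    (h : ∀ j ≤ N, v j = c) : polygonIntegral f v N = 0 := by
  rw [polygonIntegral_congr h]
  simp [polygonIntegral, segmentIntegral]

theorem polygonIntegral_eq_of_cells {v w : ℕ → ℂ} (hv : v N = v 0) (hw : w N = w 0)
    (hcell : ∀ j < N,
      segmentIntegral f (v j) (v (j + 1)) + segmentIntegral f (v (j + 1)) (w (j + 1)) =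
        segmentIntegral f (v j) (w j) + segmentIntegral f (w j) (w (j + 1))) :
    polygonIntegral f v N = polygonIntegral f w N := by
  have key : ∑ j ∈ Finset.range N, (segmentIntegral f (v j) (v (j + 1))
      - segmentIntegral f (w j) (w (j + 1))) = ∑ j ∈ Finset.range N,
      (segmentIntegral f (v j) (w j) - segmentIntegral f (v (j + 1)) (w (j + 1))) :=
    Finset.sum_congr rfl fun j hj => by linear_combination hcell j (Finset.mem_range.1 hj)
  rw [Finset.sum_sub_distrib, Finset.sum_range_sub' (fun j => segmentIntegral f (v j) (w j)),
    hv, hw, sub_self] at key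
  exact sub_eq_zero.1 key

end Polygon

section Grid

theorem IsCompact.exists_forall_ball_subset_mapsTo_ball {X E : Type*} [PseudoMetricSpace X]
    [PseudoMetricSpace E] {s : Set X} {U : Set E} {σ : X → E} (hs : IsCompact s)
    (hσ : ContinuousOn σ s) (hU : IsOpen U) (hσU : MapsTo σ s U) :
    ∃ r δ : ℝ, 0 < δ ∧
      ∀ p ∈ s, ball (σ p) r ⊆ U ∧ MapsTo σ (s ∩ ball p δ) (ball (σ p) r) := by
  obtain ⟨r, hr, hrU⟩ :=
    (hs.image_of_continuousOn hσ).exists_thickening_subset_open hU hσU.image_subset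
  obtain ⟨δ, hδ, huc⟩ :=
    Metric.uniformContinuousOn_iff.1 (hs.uniformContinuousOn_of_continuous hσ) r hr
  refine ⟨r, δ, hδ, fun p hp =>
    ⟨(ball_subset_thickening (mem_image_of_mem σ hp) r).trans hrU, fun q hq => ?_⟩⟩
  rw [mem_ball, dist_comm]
  exact huc p hp q hq.1 (by rw [dist_comm]; exact hq.2)

def gridInterval (N i : ℕ) : Set ℝ := Icc ((i : ℝ) / N) (((i + 1 : ℕ) : ℝ) / N)

variable {N i : ℕ}

theorem div_le_succ_div : (i : ℝ) / N ≤ ((i + 1 : ℕ) : ℝ) / N := by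
  gcongr
  exact_mod_cast i.le_succ

theorem left_mem_gridInterval : (i : ℝ) / N ∈ gridInterval N i := left_mem_Icc.2 div_le_succ_div

theorem right_mem_gridInterval : ((i + 1 : ℕ) : ℝ) / N ∈ gridInterval N i :=
  right_mem_Icc.2 div_le_succ_div

theorem div_mem_Icc_zero_one (hi : i ≤ N) : (i : ℝ) / N ∈ Icc (0 : ℝ) 1 :=
  ⟨by positivity, div_le_one_of_le₀ (by exact_mod_cast hi) N.cast_nonneg⟩

theorem gridInterval_subset_Icc (hi : i < N) : gridInterval N i ⊆ Icc 0 1 :=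
  Icc_subset_Icc (div_mem_Icc_zero_one hi.le).1 (div_mem_Icc_zero_one hi).2

theorem gridInterval_subset_closedBall :
    gridInterval N i ⊆ closedBall ((i : ℝ) / N) (1 / N) := by
  intro t ht
  rw [Real.closedBall_eq_Icc]
  have hN : (0 : ℝ) ≤ 1 / N := by positivity
  refine ⟨le_trans (by linarith) ht.1, ht.2.trans_eq ?_⟩
  push_cast
  ring

theorem exists_gridInterval_prod_mapsTo_ball {E : Type*} [PseudoMetricSpace E] {U : Set E}
    {σ : ℝ × ℝ → E} (hσ : ContinuousOn σ (Icc 0 1 ×ˢ Icc 0 1)) (hU : IsOpen U)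
    (hσU : MapsTo σ (Icc 0 1 ×ˢ Icc 0 1) U) :
    ∃ N : ℕ, 0 < N ∧ ∀ i < N, ∀ j < N, ∃ c r, ball c r ⊆ U ∧
      MapsTo σ (gridInterval N i ×ˢ gridInterval N j) (ball c r) := by
  obtain ⟨r, δ, hδ, hball⟩ :=
    (isCompact_Icc.prod isCompact_Icc).exists_forall_ball_subset_mapsTo_ball hσ hU hσU
  obtain ⟨N, hN⟩ := exists_nat_one_div_lt hδ
  refine ⟨N + 1, N.succ_pos, fun i hi j hj => ?_⟩
  set p : ℝ × ℝ := ((i : ℝ) / (N + 1 : ℕ), (j : ℝ) / (N + 1 : ℕ))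
  have hp : p ∈ Icc (0 : ℝ) 1 ×ˢ Icc (0 : ℝ) 1 :=
    ⟨div_mem_Icc_zero_one hi.le, div_mem_Icc_zero_one hj.le⟩
  refine ⟨σ p, r, (hball p hp).1, (hball p hp).2.mono_left fun q hq =>
    ⟨⟨gridInterval_subset_Icc hi hq.1, gridInterval_subset_Icc hj hq.2⟩, ?_⟩⟩
  have hq : q ∈ closedBall p (1 / (N + 1 : ℕ)) := by
    rw [← closedBall_prod_same]
    exact ⟨gridInterval_subset_closedBall hq.1, gridInterval_subset_closedBall hq.2⟩
  exact closedBall_subset_ball (by exact_mod_cast hN) hq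

end Grid

section GridPolygon

variable {U : Set ℂ} {f : ℂ → ℂ} {N : ℕ}

theorem polygonIntegral_eq_of_forall_mapsTo_ball {σ : ℝ × ℝ → ℂ} {s₀ s₁ : ℝ}
    (hf : DifferentiableOn ℂ f U) (hs : s₀ ≤ s₁)
    (hcells : ∀ j < N, ∃ c r, ball c r ⊆ U ∧
      MapsTo σ (Icc s₀ s₁ ×ˢ gridInterval N j) (ball c r))
    (h₀ : σ (s₀, 0) = σ (s₀, 1)) (h₁ : σ (s₁, 0) = σ (s₁, 1)) :
    polygonIntegral f (fun j => σ (s₀, j / N)) N =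
      polygonIntegral f (fun j => σ (s₁, j / N)) N := by
  obtain rfl | hN := N.eq_zero_or_pos
  · simp [polygonIntegral]
  have hNN : (N : ℝ) / N = 1 := div_self (Nat.cast_ne_zero.2 hN.ne' : (N : ℝ) ≠ 0)
  refine polygonIntegral_eq_of_cells (by simp [hNN, h₀]) (by simp [hNN, h₁]) fun j hj => ?_
  obtain ⟨c, r, hcU, hmaps⟩ := hcells j hj
  obtain ⟨F, hF⟩ := (hf.mono hcU).isExactOn_ball
  have hcorner : ∀ s ∈ Icc s₀ s₁, ∀ t ∈ gridInterval N j, σ (s, t) ∈ ball c r :=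
    fun s hs t ht => hmaps ⟨hs, ht⟩
  exact segmentIntegral_add_segmentIntegral_eq (convex_ball c r) (hf.mono hcU).continuousOn hF
    (hcorner _ (left_mem_Icc.2 hs) _ left_mem_gridInterval)
    (hcorner _ (left_mem_Icc.2 hs) _ right_mem_gridInterval)
    (hcorner _ (right_mem_Icc.2 hs) _ left_mem_gridInterval)
    (hcorner _ (right_mem_Icc.2 hs) _ right_mem_gridInterval)

theorem polygonIntegral_eq_of_homotopy {σ : ℝ × ℝ → ℂ} (hf : DifferentiableOn ℂ f U)
    (hcells : ∀ i < N, ∀ j < N, ∃ c r, ball c r ⊆ U ∧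
      MapsTo σ (gridInterval N i ×ˢ gridInterval N j) (ball c r))
    (hper : ∀ s ∈ Icc (0 : ℝ) 1, σ (s, 0) = σ (s, 1)) :
    polygonIntegral f (fun j => σ (0, j / N)) N =
      polygonIntegral f (fun j => σ (1, j / N)) N := by
  obtain rfl | hN := N.eq_zero_or_pos
  · simp [polygonIntegral]
  set row : ℕ → ℂ := fun i => polygonIntegral f (fun j => σ ((i : ℝ) / N, (j : ℝ) / N)) N
  have hrow : ∀ i < N, row (i + 1) - row i = 0 := fun i hi => sub_eq_zero.2 <|
    (polygonIntegral_eq_of_forall_mapsTo_ball hf div_le_succ_div (hcells i hi)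
      (hper _ (div_mem_Icc_zero_one hi.le)) (hper _ (div_mem_Icc_zero_one hi))).symm
  have htelescope := Finset.sum_range_sub row N
  rw [Finset.sum_eq_zero fun i hi => hrow i (Finset.mem_range.1 hi)] at htelescope
  simp only [row, Nat.cast_zero, zero_div, div_self (Nat.cast_ne_zero.2 hN.ne' : (N : ℝ) ≠ 0)]
    at htelescope
  exact (sub_eq_zero.1 htelescope.symm).symm

theorem PiecewiseC1On.integral_eq_polygonIntegral {γ : ℝ → ℂ} (hγ : PiecewiseC1On γ 0 1)
    (hf : DifferentiableOn ℂ f U) (hN : 0 < N)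
    (hcells : ∀ j < N, ∃ c r, ball c r ⊆ U ∧ MapsTo γ (gridInterval N j) (ball c r)) :
    ∫ t in (0 : ℝ)..1, f (γ t) * deriv γ t = polygonIntegral f (fun j => γ (j / N)) N := by
  have hpiece : ∀ j < N,
      IntervalIntegrable (fun t => f (γ t) * deriv γ t) volume
        ((j : ℝ) / N) ((j + 1 : ℕ) / N) ∧
      ∫ t in (j : ℝ) / N..((j + 1 : ℕ) : ℝ) / N, f (γ t) * deriv γ t =
        segmentIntegral f (γ (j / N)) (γ ((j + 1 : ℕ) / N)) := by
    intro j hj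
    obtain ⟨c, r, hcU, hmaps⟩ := hcells j hj
    obtain ⟨F, hF⟩ := (hf.mono hcU).isExactOn_ball
    have hfc := (hf.mono hcU).continuousOn
    have h₀ := gridInterval_subset_Icc hj left_mem_gridInterval
    have h₁ := gridInterval_subset_Icc hj right_mem_gridInterval
    refine ⟨hγ.intervalIntegrable_comp_mul_deriv h₀.1 div_le_succ_div h₁.2 hfc hmaps, ?_⟩
    rw [hγ.integral_comp_mul_deriv_eq_sub h₀.1 div_le_succ_div h₁.2 hfc hmaps hF,
      segmentIntegral_eq_sub (convex_ball c r) hfc hF (hmaps left_mem_gridInterval)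
        (hmaps right_mem_gridInterval)]
  have hsum := sum_integral_adjacent_intervals (a := fun j : ℕ => (j : ℝ) / N)
    fun j hj => (hpiece j hj).1
  simp only [Nat.cast_zero, zero_div, div_self (Nat.cast_ne_zero.2 hN.ne' : (N : ℝ) ≠ 0)]
    at hsum
  rw [← hsum]
  exact Finset.sum_congr rfl fun j hj => (hpiece j (Finset.mem_range.1 hj)).2

end GridPolygon

theorem cauchy_nullhomotopic_general (U : Set ℂ) (hU : IsOpen U)
    (γ : ℝ → ℂ) (hγ : PiecewiseC1On γ 0 1)
    (K : Set ℂ) (hKU : K ⊆ U)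
    (σ : ℝ × ℝ → ℂ) (hσ : ContinuousOn σ (Icc 0 1 ×ˢ Icc 0 1))
    (hσK : ∀ p ∈ Icc (0:ℝ) 1 ×ˢ Icc (0:ℝ) 1, σ p ∈ K)
    (hσ0 : ∀ x ∈ Icc (0:ℝ) 1, σ (0, x) = γ x)
    (hσ1 : ∃ c : ℂ, ∀ x ∈ Icc (0:ℝ) 1, σ (1, x) = c)
    (hσc : ∀ t ∈ Icc (0:ℝ) 1, σ (t, 0) = σ (t, 1))
    (f : ℂ → ℂ) (hf : DifferentiableOn ℂ f U) :
    ∫ t in (0:ℝ)..1, f (γ t) * deriv γ t = 0 := by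
  obtain ⟨c₁, hσ1⟩ := hσ1
  obtain ⟨N, hN, hcells⟩ :=
    exists_gridInterval_prod_mapsTo_ball hσ hU fun p hp => hKU (hσK p hp)
  have hγcells : ∀ j < N, ∃ c r, ball c r ⊆ U ∧
      MapsTo γ (gridInterval N j) (ball c r) := by
    intro j hj
    obtain ⟨c, r, hcU, hmaps⟩ := hcells 0 hN j hj
    refine ⟨c, r, hcU, fun t ht => ?_⟩
    rw [← hσ0 t (gridInterval_subset_Icc hj ht)]
    exact hmaps ⟨by simpa using left_mem_gridInterval (N := N) (i := 0), ht⟩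
  calc ∫ t in (0:ℝ)..1, f (γ t) * deriv γ t
      = polygonIntegral f (fun j => γ (j / N)) N := hγ.integral_eq_polygonIntegral hf hN hγcells
    _ = polygonIntegral f (fun j => σ (0, j / N)) N :=
      polygonIntegral_congr fun j hj => (hσ0 _ (div_mem_Icc_zero_one hj)).symm
    _ = polygonIntegral f (fun j => σ (1, j / N)) N :=
      polygonIntegral_eq_of_homotopy hf hcells hσc
    _ = 0 := polygonIntegral_eq_zero_of_forall_eq fun j hj => hσ1 _ (div_mem_Icc_zero_one hj)

theorem cauchy_nullhomotopic (U : Set ℂ) (hU : IsOpen U)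
    (γ : ℝ → ℂ) (hγ : PiecewiseC1On γ 0 1) (hc : γ 0 = γ 1)
    (hγU : ∀ t ∈ Icc (0:ℝ) 1, γ t ∈ U)
    (K : Set ℂ) (hK : IsCompact K) (hKU : K ⊆ U)
    (σ : ℝ × ℝ → ℂ) (hσ : ContinuousOn σ (Icc 0 1 ×ˢ Icc 0 1))
    (hσK : ∀ p ∈ Icc (0:ℝ) 1 ×ˢ Icc (0:ℝ) 1, σ p ∈ K)
    (hσ0 : ∀ x ∈ Icc (0:ℝ) 1, σ (0, x) = γ x)
    (hσ1 : ∃ c : ℂ, ∀ x ∈ Icc (0:ℝ) 1, σ (1, x) = c)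
    (hσc : ∀ t ∈ Icc (0:ℝ) 1, σ (t, 0) = σ (t, 1))
    (f : ℂ → ℂ) (hf : DifferentiableOn ℂ f U) :
    ∫ t in (0:ℝ)..1, f (γ t) * deriv γ t = 0 :=
  cauchy_nullhomotopic_general U hU γ hγ K hKU σ hσ hσK hσ0 hσ1 hσc f hf
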